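/- For f, g ∈ ℓᵖ(I) with 1 ≤ p < ∞, the following are equivalent: (1) f ≺ g and g ≺ f; (2) there is a permutation operator P on ℓᵖ(I) (i.e., P e_j = e_{θ(j)} for some bijection θ : I → I) with f = Pg. -/

import Mathlib

open scoped ENNReal

/-- The standard basis element `e i` of `ℓᵖ(I)`. -/
noncomputable def stdb (p : ℝ≥0∞) {I : Type*} (i : I) : lp (fun _ : I => ℝ) p :=
  letI := Classical.decEq I
  lp.single p i 1

/-- A bounded linear operator `A : ℓᵖ(J) → ℓᵖ(I)` is positive if `A f ≥ 0` whenever `f ≥ 0`. -/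
def IsPositiveOp {I J : Type*} {p : ℝ≥0∞} [Fact (1 ≤ p)]
    (A : lp (fun _ : J => ℝ) p →L[ℝ] lp (fun _ : I => ℝ) p) : Prop :=
  ∀ f : lp (fun _ : J => ℝ) p, (∀ j, 0 ≤ f j) → ∀ i, 0 ≤ A f i

/-- Row stochastic: positive and each row sum `∑_j ⟨A e_j, e_i⟩` equals 1. -/
def IsRowStochastic {I J : Type*} {p : ℝ≥0∞} [Fact (1 ≤ p)]
    (A : lp (fun _ : J => ℝ) p →L[ℝ] lp (fun _ : I => ℝ) p) : Prop :=
  IsPositiveOp A ∧ ∀ i : I, HasSum (fun j : J => A (stdb p j) i) 1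

/-- Column stochastic: positive and each column sum `∑_i ⟨A e_j, e_i⟩` equals 1. -/
def IsColumnStochastic {I J : Type*} {p : ℝ≥0∞} [Fact (1 ≤ p)]
    (A : lp (fun _ : J => ℝ) p →L[ℝ] lp (fun _ : I => ℝ) p) : Prop :=
  IsPositiveOp A ∧ ∀ j : J, HasSum (fun i : I => A (stdb p j) i) 1

/-- Doubly stochastic: both row and column stochastic. -/
def IsDoublyStochastic {I J : Type*} {p : ℝ≥0∞} [Fact (1 ≤ p)]
    (A : lp (fun _ : J => ℝ) p →L[ℝ] lp (fun _ : I => ℝ) p) : Prop :=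
  IsRowStochastic A ∧ IsColumnStochastic A

/-- `f ≺ g` : `f` is majorized by `g`, i.e. `f = D g` for some doubly stochastic `D`. -/
def Majorized {I : Type*} {p : ℝ≥0∞} [Fact (1 ≤ p)]
    (f g : lp (fun _ : I => ℝ) p) : Prop :=
  ∃ D : lp (fun _ : I => ℝ) p →L[ℝ] lp (fun _ : I => ℝ) p,
    IsDoublyStochastic D ∧ f = D g

/-- `T` preserves majorization if `f ≺ g` implies `T f ≺ T g`. -/
def PreservesMajorization {I : Type*} {p : ℝ≥0∞} [Fact (1 ≤ p)]
    (T : lp (fun _ : I => ℝ) p →L[ℝ] lp (fun _ : I => ℝ) p) : Prop :=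
  ∀ f g : lp (fun _ : I => ℝ) p, Majorized f g → Majorized (T f) (T g)

/-!
If `f = D g` and `g = E f` with `D`, `E` doubly stochastic, pick an even `n ≥ p`: then
`φ x = x ^ n` is strictly convex and `φ ∘ f`, `φ ∘ g` are summable. Jensen along each row of `D`
and the unit column sums give `∑ φ ∘ f ≤ ∑ φ ∘ g`, and symmetrically `∑ φ ∘ g ≤ ∑ φ ∘ f`, so
every row inequality is an equality and `D (e j) i ≠ 0` forces `g j = f i`. Thus `D` restricts to
a doubly stochastic matrix between the level sets `{f = t}` and `{g = t}`, which therefore have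
the same cardinality (by double counting if finite; otherwise because every row has a nonzero
entry and every column only countably many). Matching the level sets gives the permutation.
Conversely, a permutation operator and its inverse are doubly stochastic.
-/

open Set

universe u

section Jensen
variable {ι : Type*} {φ : ℝ → ℝ} {w x : ι → ℝ} {μ : ℝ}

lemma ConvexOn.add_mul_sub_le_of_hasDerivAt {φ' : ℝ} (hφ : ConvexOn ℝ univ φ)
    (hφ' : HasDerivAt φ φ' μ) (y : ℝ) : φ μ + φ' * (y - μ) ≤ φ y := by
  rcases lt_trichotomy y μ with h | rfl | h
  · have := hφ.slope_le_of_hasDerivAt (mem_univ y) (mem_univ μ) h hφ'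
    rw [slope_def_field, div_le_iff₀ (sub_pos.2 h)] at this
    linarith
  · simp
  · have := hφ.le_slope_of_hasDerivAt (mem_univ μ) (mem_univ y) h hφ'
    rw [slope_def_field, le_div_iff₀ (sub_pos.2 h)] at this
    linarith

lemma StrictConvexOn.add_mul_sub_lt_of_hasDerivAt {φ' y : ℝ} (hφ : StrictConvexOn ℝ univ φ)
    (hφ' : HasDerivAt φ φ' μ) (hy : y ≠ μ) : φ μ + φ' * (y - μ) < φ y := by
  rcases hy.lt_or_gt with h | h
  · have := hφ.slope_lt_of_hasDerivAt (mem_univ y) (mem_univ μ) h hφ'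
    rw [slope_def_field, div_lt_iff₀ (sub_pos.2 h)] at this
    linarith
  · have := hφ.lt_slope_of_hasDerivAt (mem_univ μ) (mem_univ y) h hφ'
    rw [slope_def_field, lt_div_iff₀ (sub_pos.2 h)] at this
    linarith

lemma hasSum_mul_affine (hw : HasSum w 1) (hμ : HasSum (fun j => w j * x j) μ) (c m : ℝ) :
    HasSum (fun j => w j * (c + m * (x j - μ))) c := by
  have h := (hw.mul_left (c - m * μ)).add (hμ.mul_left m)
  rw [mul_one, sub_add_cancel] at h
  rwa [show (fun j => w j * (c + m * (x j - μ))) = fun j => (c - m * μ) * w j + m * (w j * x j)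
    from funext fun j => by ring]

lemma ConvexOn.map_le_tsum_mul (hφ : ConvexOn ℝ univ φ) (hd : DifferentiableAt ℝ φ μ)
    (hw0 : ∀ j, 0 ≤ w j) (hw : HasSum w 1) (hμ : HasSum (fun j => w j * x j) μ)
    (hs : Summable fun j => w j * φ (x j)) : φ μ ≤ ∑' j, w j * φ (x j) :=
  hasSum_le (fun j => mul_le_mul_of_nonneg_left
      (hφ.add_mul_sub_le_of_hasDerivAt hd.hasDerivAt (x j)) (hw0 j))
    (hasSum_mul_affine hw hμ _ _) hs.hasSum

lemma StrictConvexOn.eq_of_tsum_mul_le (hφ : StrictConvexOn ℝ univ φ)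
    (hd : DifferentiableAt ℝ φ μ) (hw0 : ∀ j, 0 ≤ w j) (hw : HasSum w 1)
    (hμ : HasSum (fun j => w j * x j) μ) (hs : Summable fun j => w j * φ (x j))
    (hle : ∑' j, w j * φ (x j) ≤ φ μ) {j : ι} (hj : w j ≠ 0) : x j = μ := by
  by_contra hx
  have hlt : φ μ < ∑' j, w j * φ (x j) :=
    hasSum_lt (fun k => mul_le_mul_of_nonneg_left
        (hφ.convexOn.add_mul_sub_le_of_hasDerivAt hd.hasDerivAt (x k)) (hw0 k))
      (mul_lt_mul_of_pos_left (hφ.add_mul_sub_lt_of_hasDerivAt hd.hasDerivAt hx)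
        ((hw0 j).lt_of_ne' hj))
      (hasSum_mul_affine hw hμ _ _) hs.hasSum
  exact hle.not_gt hlt

end Jensen

structure IsDoublyStochasticMatrix {α β : Type*} (w : α → β → ℝ) : Prop where
  nonneg : ∀ i j, 0 ≤ w i j
  hasSum_row : ∀ i, HasSum (w i) 1
  hasSum_col : ∀ j, HasSum (fun i => w i j) 1

namespace IsDoublyStochasticMatrix

section Analysis
variable {α β : Type*} {w : α → β → ℝ}

lemma transpose (hw : IsDoublyStochasticMatrix w) :
    IsDoublyStochasticMatrix (fun j i => w i j) :=
  ⟨fun j i => hw.nonneg i j, hw.hasSum_col, hw.hasSum_row⟩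

lemma le_one (hw : IsDoublyStochasticMatrix w) (i : α) (j : β) : w i j ≤ 1 :=
  le_hasSum (hw.hasSum_row i) j fun k _ => hw.nonneg i k

lemma summable_mul {y : β → ℝ} (hw : IsDoublyStochasticMatrix w) (hy0 : ∀ j, 0 ≤ y j)
    (hy : Summable y) (i : α) : Summable fun j => w i j * y j :=
  hy.of_nonneg_of_le (fun j => mul_nonneg (hw.nonneg i j) (hy0 j))
    fun j => mul_le_of_le_one_left (hy0 j) (hw.le_one i j)

lemma hasSum_tsum_mul {y : β → ℝ} (hw : IsDoublyStochasticMatrix w) (hy0 : ∀ j, 0 ≤ y j)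
    (hy : Summable y) : HasSum (fun i => ∑' j, w i j * y j) (∑' j, y j) := by
  have hcol : ∀ j, HasSum (fun i => w i j * y j) (y j) := fun j => by
    simpa using (hw.hasSum_col j).mul_right (y j)
  have hswap : Summable fun q : β × α => w q.2 q.1 * y q.1 :=
    (summable_prod_of_nonneg fun q => mul_nonneg (hw.nonneg _ _) (hy0 _)).2
      ⟨fun j => (hcol j).summable, by simpa only [fun j => (hcol j).tsum_eq] using hy⟩
  have hswap' := hswap.hasSum
  rw [← (hswap'.prod_fiberwise hcol).tsum_eq] at hswap'
  have htot : HasSum (fun q : α × β => w q.1 q.2 * y q.2) (∑' j, y j) :=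
    (Equiv.prodComm α β).symm.hasSum_iff.1 hswap'
  exact htot.prod_fiberwise fun i => (hw.summable_mul hy0 hy i).hasSum

lemma map_le_tsum_mul {φ : ℝ → ℝ} {a : α → ℝ} {b : β → ℝ} (hw : IsDoublyStochasticMatrix w)
    (ha : ∀ i, HasSum (fun j => w i j * b j) (a i)) (hφ : ConvexOn ℝ univ φ)
    (hφd : Differentiable ℝ φ) (hφ0 : ∀ x, 0 ≤ φ x) (hφb : Summable (φ ∘ b)) (i : α) :
    φ (a i) ≤ ∑' j, w i j * φ (b j) :=
  hφ.map_le_tsum_mul (hφd _) (hw.nonneg i) (hw.hasSum_row i) (ha i)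
    (hw.summable_mul (fun _ => hφ0 _) hφb i)

lemma tsum_map_le {φ : ℝ → ℝ} {a : α → ℝ} {b : β → ℝ} (hw : IsDoublyStochasticMatrix w)
    (ha : ∀ i, HasSum (fun j => w i j * b j) (a i)) (hφ : ConvexOn ℝ univ φ)
    (hφd : Differentiable ℝ φ) (hφ0 : ∀ x, 0 ≤ φ x) (hφa : Summable (φ ∘ a))
    (hφb : Summable (φ ∘ b)) : ∑' i, φ (a i) ≤ ∑' j, φ (b j) :=
  hasSum_le (hw.map_le_tsum_mul ha hφ hφd hφ0 hφb) hφa.hasSum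
    (hw.hasSum_tsum_mul (fun _ => hφ0 _) hφb)

theorem eq_of_ne_zero {v : β → α → ℝ} {φ : ℝ → ℝ} {a : α → ℝ} {b : β → ℝ}
    (hw : IsDoublyStochasticMatrix w) (hv : IsDoublyStochasticMatrix v)
    (ha : ∀ i, HasSum (fun j => w i j * b j) (a i))
    (hb : ∀ j, HasSum (fun i => v j i * a i) (b j)) (hφ : StrictConvexOn ℝ univ φ)
    (hφd : Differentiable ℝ φ) (hφ0 : ∀ x, 0 ≤ φ x) (hφa : Summable (φ ∘ a))
    (hφb : Summable (φ ∘ b)) {i : α} {j : β} (hij : w i j ≠ 0) : b j = a i := by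
  refine hφ.eq_of_tsum_mul_le (hφd _) (hw.nonneg i) (hw.hasSum_row i) (ha i)
    (hw.summable_mul (fun _ => hφ0 _) hφb i) ?_ hij
  by_contra! hlt
  have : ∑' i, φ (a i) < ∑' j, φ (b j) :=
    hasSum_lt (hw.map_le_tsum_mul ha hφ.convexOn hφd hφ0 hφb) hlt hφa.hasSum
      (hw.hasSum_tsum_mul (fun _ => hφ0 _) hφb)
  linarith [hv.tsum_map_le hb hφ.convexOn hφd hφ0 hφb hφa]

end Analysis

section Cardinal
variable {α β : Type u} {w : α → β → ℝ}

lemma card_finset_le [Fintype β] (hw : IsDoublyStochasticMatrix w) (s : Finset α) :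
    s.card ≤ Fintype.card β := by
  have hrow : ∀ i, ∑ j, w i j = 1 := fun i => (hasSum_fintype (w i)).unique (hw.hasSum_row i)
  have : (s.card : ℝ) ≤ Fintype.card β :=
    calc (s.card : ℝ) = ∑ i ∈ s, ∑ j, w i j := by simp [hrow]
      _ = ∑ j, ∑ i ∈ s, w i j := Finset.sum_comm
      _ ≤ ∑ _j : β, (1 : ℝ) :=
        Finset.sum_le_sum fun j _ => sum_le_hasSum s (fun i _ => hw.nonneg i j) (hw.hasSum_col j)
      _ = Fintype.card β := by simp
  exact_mod_cast this

lemma mk_le (hw : IsDoublyStochasticMatrix w) : Cardinal.mk α ≤ Cardinal.mk β := by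
  cases finite_or_infinite β with
  | inl hβ =>
    have := Fintype.ofFinite β
    have : Finite α := by
      by_contra hα
      have : Infinite α := not_finite_iff_infinite.1 hα
      obtain ⟨s, hs⟩ := Infinite.exists_subset_card_eq α (Fintype.card β + 1)
      have := hw.card_finset_le s
      omega
    have := Fintype.ofFinite α
    simpa using hw.card_finset_le Finset.univ
  | inr hβ =>
    have hex : ∀ i, ∃ j, w i j ≠ 0 := fun i => by
      by_contra! h
      have hrow := hw.hasSum_row i
      rw [show w i = 0 from funext h] at hrow
      exact one_ne_zero (hrow.unique hasSum_zero)
    choose ρ hρ using hex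
    calc Cardinal.mk α ≤ Cardinal.mk β * Cardinal.aleph0 :=
          Cardinal.mk_le_mk_mul_of_mk_preimage_le ρ fun j =>
            Cardinal.mk_le_aleph0_iff.2 <| Set.Countable.to_subtype <|
              (hw.hasSum_col j).summable.countable_support.mono fun i (hi : ρ i = j) =>
                hi ▸ hρ i
      _ = Cardinal.mk β := Cardinal.mul_aleph0_eq (Cardinal.aleph0_le_mk β)

lemma nonempty_equiv (hw : IsDoublyStochasticMatrix w) : Nonempty (α ≃ β) :=
  Cardinal.eq.1 (le_antisymm hw.mk_le hw.transpose.mk_le)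

end Cardinal

section Fibers
variable {α β : Type u} {γ : Type*} {w : α → β → ℝ} {a : α → γ} {b : β → γ}

lemma restrict_fibers (hw : IsDoublyStochasticMatrix w) (hab : ∀ i j, w i j ≠ 0 → a i = b j)
    (t : γ) : IsDoublyStochasticMatrix fun (i : {i // a i = t}) (j : {j // b j = t}) => w i j where
  nonneg i j := hw.nonneg i j
  hasSum_row i := (hasSum_subtype_iff_of_support_subset (s := {j | b j = t})
    fun j hj => (hab i j hj).symm.trans i.2).2 (hw.hasSum_row i)
  hasSum_col j := (hasSum_subtype_iff_of_support_subset (s := {i | a i = t})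
    fun i hi => (hab i j hi).trans j.2).2 (hw.hasSum_col j)

lemma exists_equiv_comp_eq (hw : IsDoublyStochasticMatrix w)
    (hab : ∀ i j, w i j ≠ 0 → a i = b j) : ∃ σ : α ≃ β, ∀ i, b (σ i) = a i :=
  ⟨Equiv.ofFiberEquiv fun t => ((hw.restrict_fibers hab t).nonempty_equiv).some,
    Equiv.ofFiberEquiv_map _⟩

end Fibers
end IsDoublyStochasticMatrix

section lp
variable {I J : Type*} {p : ℝ≥0∞}

lemma stdb_apply [DecidableEq J] (j i : J) : stdb p j i = if i = j then 1 else 0 := by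
  simp only [stdb, lp.single_apply, Pi.single_apply]
  congr

lemma stdb_nonneg (j i : J) : 0 ≤ stdb p j i := by
  classical
  rw [stdb_apply]
  split_ifs <;> norm_num

variable [Fact (1 ≤ p)]

lemma hasSum_apply_stdb_mul (hp : p ≠ ∞)
    (A : lp (fun _ : J => ℝ) p →L[ℝ] lp (fun _ : I => ℝ) p) (F : lp (fun _ : J => ℝ) p)
    (i : I) : HasSum (fun j => A (stdb p j) i * F j) (A F i) := by
  classical
  have hsingle : ∀ j, lp.single p j (F j) = F j • stdb p j := fun j => by
    rw [stdb, ← lp.single_smul, smul_eq_mul, mul_one]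
  have heval : ∀ G : lp (fun _ : I => ℝ) p, lp.evalCLM ℝ (fun _ => ℝ) p i G = G i := fun _ => rfl
  simpa [hsingle, heval, mul_comm] using
    (lp.hasSum_single hp F).mapL ((lp.evalCLM ℝ (fun _ => ℝ) p i).comp A)

lemma ext_stdb (hp : p ≠ ∞) {A B : lp (fun _ : J => ℝ) p →L[ℝ] lp (fun _ : I => ℝ) p}
    (h : ∀ j, A (stdb p j) = B (stdb p j)) : A = B := by
  ext F i
  have hB := hasSum_apply_stdb_mul hp B F i
  simp only [← h] at hB
  exact (hasSum_apply_stdb_mul hp A F i).unique hB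

lemma IsDoublyStochastic.isDoublyStochasticMatrix
    {D : lp (fun _ : J => ℝ) p →L[ℝ] lp (fun _ : I => ℝ) p} (hD : IsDoublyStochastic D) :
    IsDoublyStochasticMatrix fun i j => D (stdb p j) i :=
  ⟨fun i j => hD.1.1 _ (stdb_nonneg j) i, hD.1.2, hD.2.2⟩

lemma lp.summable_norm_pow (F : lp (fun _ : I => ℝ) p) {n : ℕ} (hn : p ≤ n) :
    Summable fun i => ‖F i‖ ^ n := by
  have hn0 : 0 < (n : ℝ≥0∞).toReal := by
    have : (1 : ℝ≥0∞) ≤ n := (Fact.out : 1 ≤ p).trans hn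
    simp only [ENNReal.toReal_natCast, Nat.cast_pos]
    exact_mod_cast this
  simpa using (memℓp_gen_iff hn0).1 ((lp.memℓp F).of_exponent_ge hn)

end lp

section Permutation
variable {I J : Type*} {p : ℝ≥0∞}

lemma Memℓp.comp_equiv {E : Type*} [NormedAddCommGroup E] {f : I → E} (hf : Memℓp f p)
    (hp : 0 < p.toReal) (θ : J ≃ I) : Memℓp (f ∘ θ) p :=
  memℓp_gen <| θ.summable_iff.2 ((memℓp_gen_iff hp).1 hf)

variable [Fact (1 ≤ p)]

lemma toReal_pos_of_ne_top (hp : p ≠ ∞) : 0 < p.toReal :=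
  ENNReal.toReal_pos (zero_lt_one.trans_le Fact.out).ne' hp

noncomputable def permOp (hp : p ≠ ∞) (θ : J ≃ I) :
    lp (fun _ : J => ℝ) p →L[ℝ] lp (fun _ : I => ℝ) p :=
  LinearMap.mkContinuous
    { toFun := fun F => ⟨F ∘ θ.symm, (lp.memℓp F).comp_equiv (toReal_pos_of_ne_top hp) θ.symm⟩
      map_add' := fun _ _ => rfl
      map_smul' := fun _ _ => rfl }
    1 fun F => by
      rw [one_mul, lp.norm_eq_tsum_rpow (toReal_pos_of_ne_top hp),
        lp.norm_eq_tsum_rpow (toReal_pos_of_ne_top hp)]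
      exact (congrArg (· ^ _) (θ.symm.tsum_eq fun j => ‖F j‖ ^ p.toReal)).le

@[simp]
lemma permOp_apply (hp : p ≠ ∞) (θ : J ≃ I) (F : lp (fun _ : J => ℝ) p) (i : I) :
    permOp hp θ F i = F (θ.symm i) := rfl

lemma permOp_stdb (hp : p ≠ ∞) (θ : J ≃ I) (j : J) : permOp hp θ (stdb p j) = stdb p (θ j) := by
  classical
  ext i
  simp [stdb_apply, Equiv.symm_apply_eq]

lemma isDoublyStochastic_permOp (hp : p ≠ ∞) (θ : J ≃ I) :
    IsDoublyStochastic (permOp hp θ) := by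
  classical
  have hpos : IsPositiveOp (permOp hp θ) := fun F hF i => hF _
  refine ⟨⟨hpos, fun i => ?_⟩, ⟨hpos, fun j => ?_⟩⟩
  · simpa [permOp_stdb, stdb_apply, Equiv.eq_symm_apply, @eq_comm _ i] using
      hasSum_ite_eq (θ.symm i) (1 : ℝ)
  · simpa [permOp_stdb, stdb_apply] using hasSum_ite_eq (θ j) (1 : ℝ)

end Permutation

lemma Majorized.exists_equiv {I : Type*} {p : ℝ≥0∞} [Fact (1 ≤ p)] (hp : p ≠ ∞)
    {f g : lp (fun _ : I => ℝ) p} (hfg : Majorized f g) (hgf : Majorized g f) :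
    ∃ σ : I ≃ I, ∀ i, g (σ i) = f i := by
  obtain ⟨D, hD, rfl⟩ := hfg
  obtain ⟨E, hE, hgE⟩ := hgf
  obtain ⟨m, hm⟩ := ENNReal.exists_nat_gt hp
  have hm0 : 0 < m := by exact_mod_cast (zero_lt_one.trans_le Fact.out).trans hm
  have hn : Even (2 * m) := even_two_mul m
  have hn0 : 2 * m ≠ 0 := by omega
  have hpn : p ≤ (2 * m : ℕ) := hm.le.trans (by exact_mod_cast (by omega : m ≤ 2 * m))
  have hpow : ∀ F : lp (fun _ : I => ℝ) p, Summable fun i => F i ^ (2 * m) := fun F => by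
    simpa [hn.pow_abs] using lp.summable_norm_pow F hpn
  have hgE' : ∀ j, HasSum (fun i => E (stdb p i) j * D g i) (g j) := fun j => by
    simpa only [← hgE] using hasSum_apply_stdb_mul hp E (D g) j
  have hDm := hD.isDoublyStochasticMatrix
  exact hDm.exists_equiv_comp_eq fun i j hij => (hDm.eq_of_ne_zero hE.isDoublyStochasticMatrix
    (hasSum_apply_stdb_mul hp D g) hgE' (hn.strictConvexOn_pow hn0) (differentiable_pow _)
    hn.pow_nonneg (hpow _) (hpow _) hij).symm

theorem stmt12_general {I : Type*} (p : ℝ≥0∞) [Fact (1 ≤ p)] (hp : p ≠ ∞)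
    (f g : lp (fun _ : I => ℝ) p) :
    (Majorized f g ∧ Majorized g f) ↔
      ∃ (θ : I ≃ I) (P : lp (fun _ : I => ℝ) p →L[ℝ] lp (fun _ : I => ℝ) p),
        (∀ j : I, P (stdb p j) = stdb p (θ j)) ∧ f = P g := by
  constructor
  · rintro ⟨hfg, hgf⟩
    obtain ⟨σ, hσ⟩ := hfg.exists_equiv hp hgf
    refine ⟨σ.symm, permOp hp σ.symm, permOp_stdb hp σ.symm, ?_⟩
    ext i
    simp [hσ]
  · rintro ⟨θ, P, hP, rfl⟩
    obtain rfl : P = permOp hp θ := ext_stdb hp fun j => (hP j).trans (permOp_stdb hp θ j).symm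
    refine ⟨⟨_, isDoublyStochastic_permOp hp θ, rfl⟩, _, isDoublyStochastic_permOp hp θ.symm, ?_⟩
    ext i
    simp

/-- `f ≺ g` and `g ≺ f` if and only if `f = P g` for some permutation operator `P`. -/
theorem stmt12 {I : Type*} [Nonempty I] (p : ℝ≥0∞) [Fact (1 ≤ p)] (hp : p ≠ ∞)
    (f g : lp (fun _ : I => ℝ) p) :
    (Majorized f g ∧ Majorized g f) ↔
      ∃ (θ : I ≃ I) (P : lp (fun _ : I => ℝ) p →L[ℝ] lp (fun _ : I => ℝ) p),
        (∀ j : I, P (stdb p j) = stdb p (θ j)) ∧ f = P g :=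
  stmt12_general p hp f g
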